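/- Let J = diag(J1,J2,J3) with J1,J2,J3 > 0 and E(w) := J^{-1}(Jw × w). Let (R, ω) solve the free-rotation dynamics R'(t) = R(t)·[ω(t)]ₓ, ω'(t) = E(ω(t)) with R(t₀) ∈ SO(3); suppose ω(t₀) ≠ 0 is an eigenvector of J, and let å ∈ ℝ³ be a unit vector NOT parallel to M := R(t₀)·J·ω(t₀). Set u := M/|M|, a₁ := åᵀu (so a₁² < 1), w := |ω(t₀)|, T := 2π/w, and a(t) := R(t)ᵀ·å. Then the persistent excitation condition holds with parameters T and μ := min(1 − a₁², (1 + a₁²)/2) ∈ (0,1); in particular, for every t and every unit vector x ∈ ℝ³, (1/T)·∫_t^{t+T} (a(s)ᵀx)² ds ≤ 1 − μ. -/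

import Mathlib

open Matrix MeasureTheory intervalIntegral

noncomputable section

attribute [local instance] Matrix.normedAddCommGroup Matrix.normedSpace

/-- Cross product on ℝ³. -/
def cross3 (x y : Fin 3 → ℝ) : Fin 3 → ℝ :=
  ![x 1 * y 2 - x 2 * y 1, x 2 * y 0 - x 0 * y 2, x 0 * y 1 - x 1 * y 0]

/-- Euclidean norm on ℝ³. -/
def enorm3 (x : Fin 3 → ℝ) : ℝ := Real.sqrt (∑ i, (x i) ^ 2)

/-- Skew-symmetric cross-product matrix `[x]ₓ`. -/
def skew3 (x : Fin 3 → ℝ) : Matrix (Fin 3) (Fin 3) ℝ :=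
  !![0, -x 2, x 1; x 2, 0, -x 0; -x 1, x 0, 0]

/-- Persistent excitation condition with parameters `T, μ`. -/
def PE (a : ℝ → Fin 3 → ℝ) (T μ : ℝ) : Prop :=
  ∀ t : ℝ,
    ((T⁻¹ • ∫ τ in t..(t + T), (skew3 (a τ))ᵀ * skew3 (a τ)) -
      μ • (1 : Matrix (Fin 3) (Fin 3) ℝ)).PosSemidef

/-- Squared Euclidean norm on ℝ⁶ = ℝ³ × ℝ³. -/
def nrm6sq (Z : Fin 3 ⊕ Fin 3 → ℝ) : ℝ := ∑ i, (Z i) ^ 2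

/-- The 6×6 block matrix `A = [[−I, [a]ₓ], [[a]ₓ, 0]]`. -/
def Amat (a : Fin 3 → ℝ) : Matrix (Fin 3 ⊕ Fin 3) (Fin 3 ⊕ Fin 3) ℝ :=
  Matrix.fromBlocks (-1) (skew3 a) (skew3 a) 0

/-!
Because `ω(t₀)` is an eigenvector of `J`, it is an equilibrium of Euler's equation, so
`ω ≡ ω(t₀) = w n` with `n` a unit vector and `a' = -(w n) × a`: the measurement precesses
uniformly about `n` with period `T`,
`a(t) = (n·b) n + cos θ (b - (n·b) n) - sin θ (n × b)`, `θ = w (t - t₀)`, `b = R(t₀)ᵀ å`.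
Averaged over a period the cross terms of `(a·x)²` vanish, leaving
`(n·b)² (n·x)² + ((p·x)² + (q·x)²) / 2` for the orthogonal frame `n`, `p = b - (n·b) n`,
`q = n × b` with `|p|² = |q|² = 1 - (n·b)²`. Bessel's inequality bounds this by
`max ((n·b)², (1 - (n·b)²) / 2) |x|² = (1 - μ) |x|²`, because `M` is parallel to `R(t₀) n` and
hence `a₁² = (n·b)²`; non-parallelism of `å` and `M` gives `a₁² < 1`.
-/

section DotProduct

variable {ι : Type*} [Fintype ι]

lemma dotProduct_self_nonneg (x : ι → ℝ) : 0 ≤ x ⬝ᵥ x := by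
  simpa using dotProduct_star_self_nonneg x

lemma dotProduct_self_pos {x : ι → ℝ} (hx : x ≠ 0) : 0 < x ⬝ᵥ x := by
  simpa using dotProduct_self_star_pos_iff.2 hx

lemma sq_dotProduct_lt_mul_of_ne_smul {y M : ι → ℝ} (hM : M ≠ 0) (hyM : ∀ s : ℝ, y ≠ s • M) :
    (y ⬝ᵥ M) ^ 2 < (y ⬝ᵥ y) * (M ⬝ᵥ M) := by
  have hMM : 0 < M ⬝ᵥ M := dotProduct_self_pos hM
  set d := (M ⬝ᵥ M) • y - (y ⬝ᵥ M) • M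
  have hd : d ≠ 0 := by
    intro h
    refine hyM ((y ⬝ᵥ M) / (M ⬝ᵥ M)) ?_
    rw [div_eq_inv_mul, ← smul_smul, ← sub_eq_zero.1 h, smul_smul, inv_mul_cancel₀ hMM.ne',
      one_smul]
  have hdd : d ⬝ᵥ d = (M ⬝ᵥ M) * ((y ⬝ᵥ y) * (M ⬝ᵥ M) - (y ⬝ᵥ M) ^ 2) := by
    simp only [d, sub_dotProduct, dotProduct_sub, smul_dotProduct, dotProduct_smul, smul_eq_mul,
      dotProduct_comm M y]
    ring
  nlinarith [dotProduct_self_pos hd]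

lemma bessel_orthogonal {e p q : ι → ℝ} {r : ℝ} (hr : 0 < r) (he : e ⬝ᵥ e = 1)
    (hp : p ⬝ᵥ p = r) (hq : q ⬝ᵥ q = r) (hep : e ⬝ᵥ p = 0) (heq : e ⬝ᵥ q = 0)
    (hpq : p ⬝ᵥ q = 0) (x : ι → ℝ) :
    r * (e ⬝ᵥ x) ^ 2 + (p ⬝ᵥ x) ^ 2 + (q ⬝ᵥ x) ^ 2 ≤ r * (x ⬝ᵥ x) := by
  set d := r • x - (r * (e ⬝ᵥ x)) • e - (p ⬝ᵥ x) • p - (q ⬝ᵥ x) • q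
  have hdd : d ⬝ᵥ d = r * (r * (x ⬝ᵥ x) - (r * (e ⬝ᵥ x) ^ 2 + (p ⬝ᵥ x) ^ 2 + (q ⬝ᵥ x) ^ 2)) := by
    simp only [d, sub_dotProduct, dotProduct_sub, smul_dotProduct, dotProduct_smul, smul_eq_mul,
      he, hp, hq, hep, heq, hpq, dotProduct_comm p e, dotProduct_comm q e, dotProduct_comm q p,
      dotProduct_comm x e, dotProduct_comm x p, dotProduct_comm x q]
    ring
  nlinarith [dotProduct_self_nonneg d]

lemma mulVec_dotProduct_mulVec [DecidableEq ι] {A : Matrix ι ι ℝ} (hA : Aᵀ * A = 1) (x y : ι → ℝ) :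
    A *ᵥ x ⬝ᵥ A *ᵥ y = x ⬝ᵥ y := by
  rw [dotProduct_mulVec, ← mulVec_transpose, mulVec_mulVec, hA, one_mulVec]

lemma ne_zero_of_diagonal_mulVec_eq_smul [DecidableEq ι] {d : ι → ℝ} (hd : ∀ i, d i ≠ 0)
    {v : ι → ℝ} (hv : v ≠ 0) {lam : ℝ} (h : diagonal d *ᵥ v = lam • v) : lam ≠ 0 := by
  rintro rfl
  refine hv (funext fun i => ?_)
  simpa [mulVec_diagonal, hd i] using congrFun h i

end DotProduct

lemma dotProduct_self_eq_enorm3_sq (x : Fin 3 → ℝ) : x ⬝ᵥ x = enorm3 x ^ 2 := by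
  rw [enorm3, Real.sq_sqrt (by positivity)]
  simp [dotProduct, sq]

lemma enorm3_pos {x : Fin 3 → ℝ} (hx : x ≠ 0) : 0 < enorm3 x :=
  Real.sqrt_pos.2 <| by
    simpa [dotProduct_self_eq_enorm3_sq, enorm3, Real.sqrt_eq_zero', sq] using
      dotProduct_self_pos hx

lemma dotProduct_self_inv_enorm3_smul {x : Fin 3 → ℝ} (hx : x ≠ 0) :
    (enorm3 x)⁻¹ • x ⬝ᵥ (enorm3 x)⁻¹ • x = 1 := by
  rw [dotProduct_smul, smul_dotProduct, dotProduct_self_eq_enorm3_sq, smul_eq_mul, smul_eq_mul]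
  field_simp [(enorm3_pos hx).ne']

lemma sq_dotProduct_inv_enorm3_smul (y M : Fin 3 → ℝ) :
    (y ⬝ᵥ (enorm3 M)⁻¹ • M) ^ 2 = (y ⬝ᵥ M) ^ 2 / (M ⬝ᵥ M) := by
  rw [dotProduct_smul, smul_eq_mul, mul_pow, inv_pow, dotProduct_self_eq_enorm3_sq]
  ring

lemma sq_dotProduct_inv_enorm3_smul_lt_one {y M : Fin 3 → ℝ} (hy : y ⬝ᵥ y = 1) (hM : M ≠ 0)
    (hyM : ∀ s : ℝ, y ≠ s • M) : (y ⬝ᵥ (enorm3 M)⁻¹ • M) ^ 2 < 1 := by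
  rw [sq_dotProduct_inv_enorm3_smul, div_lt_one (dotProduct_self_pos hM)]
  simpa [hy] using sq_dotProduct_lt_mul_of_ne_smul hM hyM

lemma sq_dotProduct_inv_enorm3_smul_mulVec {A : Matrix (Fin 3) (Fin 3) ℝ} (hA : Aᵀ * A = 1)
    {n : Fin 3 → ℝ} (hn : n ⬝ᵥ n = 1) {c : ℝ} (hc : c ≠ 0) (y : Fin 3 → ℝ) :
    (y ⬝ᵥ (enorm3 (c • A *ᵥ n))⁻¹ • (c • A *ᵥ n)) ^ 2 = (n ⬝ᵥ Aᵀ *ᵥ y) ^ 2 := by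
  rw [sq_dotProduct_inv_enorm3_smul, smul_dotProduct, dotProduct_smul, dotProduct_smul,
    mulVec_dotProduct_mulVec hA, hn, dotProduct_mulVec, ← mulVec_transpose, dotProduct_comm,
    smul_eq_mul, smul_eq_mul, smul_eq_mul]
  field_simp

lemma sq_dotProduct_transpose_mulVec_lt_one {A : Matrix (Fin 3) (Fin 3) ℝ} (hA : Aᵀ * A = 1)
    {n y : Fin 3 → ℝ} (hn : n ⬝ᵥ n = 1) (hy : y ⬝ᵥ y = 1) {c : ℝ} (hc : c ≠ 0)
    (hyM : ∀ s : ℝ, y ≠ s • c • A *ᵥ n) : (n ⬝ᵥ Aᵀ *ᵥ y) ^ 2 < 1 := by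
  have hAn : A *ᵥ n ≠ 0 := fun h => by
    simpa [h] using (mulVec_dotProduct_mulVec hA n n).trans hn
  rw [← sq_dotProduct_inv_enorm3_smul_mulVec hA hn hc]
  exact sq_dotProduct_inv_enorm3_smul_lt_one hy (smul_ne_zero hc hAn) hyM

lemma cross3_dotProduct_left (x y : Fin 3 → ℝ) : x ⬝ᵥ cross3 x y = 0 := by
  simp [cross3, dotProduct, Fin.sum_univ_three]; ring

lemma cross3_dotProduct_right (x y : Fin 3 → ℝ) : y ⬝ᵥ cross3 x y = 0 := by
  simp [cross3, dotProduct, Fin.sum_univ_three]; ring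

lemma cross3_dotProduct_self (x y : Fin 3 → ℝ) :
    cross3 x y ⬝ᵥ cross3 x y = (x ⬝ᵥ x) * (y ⬝ᵥ y) - (x ⬝ᵥ y) ^ 2 := by
  simp [cross3, dotProduct, Fin.sum_univ_three]; ring

lemma cross3_cross3 (x y : Fin 3 → ℝ) : cross3 x (cross3 x y) = (x ⬝ᵥ y) • x - (x ⬝ᵥ x) • y := by
  ext i; fin_cases i <;> simp [cross3, dotProduct, Fin.sum_univ_three] <;> ring

lemma cross3_smul_self (c : ℝ) (x : Fin 3 → ℝ) : cross3 (c • x) x = 0 := by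
  ext i; fin_cases i <;> simp [cross3] <;> ring

lemma cross3_smul_left (c : ℝ) (x y : Fin 3 → ℝ) : cross3 (c • x) y = c • cross3 x y := by
  ext i; fin_cases i <;> simp [cross3] <;> ring

lemma skew3_mulVec (x y : Fin 3 → ℝ) : skew3 x *ᵥ y = cross3 x y := by
  ext i; fin_cases i <;> simp [skew3, cross3, mulVec, dotProduct, Fin.sum_univ_three] <;> ring

lemma skew3_transpose (x : Fin 3 → ℝ) : (skew3 x)ᵀ = -skew3 x := by
  ext i j; fin_cases i <;> fin_cases j <;> simp [skew3]

lemma dotProduct_skew3_transpose_mul_skew3_mulVec (a x : Fin 3 → ℝ) :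
    x ⬝ᵥ ((skew3 a)ᵀ * skew3 a) *ᵥ x = (a ⬝ᵥ a) * (x ⬝ᵥ x) - (a ⬝ᵥ x) ^ 2 := by
  rw [← mulVec_mulVec, skew3_mulVec, dotProduct_mulVec, vecMul_transpose, skew3_mulVec,
    cross3_dotProduct_self]

lemma continuous_skew3 : Continuous skew3 := by
  unfold skew3
  fun_prop

lemma HasDerivAt.const_vecMul {m n : Type*} [Fintype m] [Fintype n] {R : ℝ → Matrix m n ℝ}
    {R' : Matrix m n ℝ} {t : ℝ} (hR : HasDerivAt R R' t) (v : m → ℝ) :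
    HasDerivAt (fun s => v ᵥ* R s) (v ᵥ* R') t :=
  ((vecMulBilin ℝ ℝ v).toContinuousLinearMap.hasFDerivAt (x := R t)).comp_hasDerivAt t hR

lemma ODE_solution_eq_of_vectorField_eq_zero {E : Type*} [NormedAddCommGroup E] [NormedSpace ℝ E]
    {v : E → E} (hv : ContDiff ℝ 1 v) {f : ℝ → E} (hf : ∀ t, HasDerivAt f (v (f t)) t)
    {t₀ : ℝ} (hf₀ : v (f t₀) = 0) (t : ℝ) : f t = f t₀ := by
  have hcont : Continuous f := continuous_iff_continuousAt.2 fun t => (hf t).continuousAt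
  have hopen : IsOpen {t | f t = f t₀} := by
    refine isOpen_iff_mem_nhds.2 fun t₁ (ht₁ : f t₁ = f t₀) => ?_
    obtain ⟨K, U, hU, hlip⟩ := (hv.contDiffAt (x := f t₀)).exists_lipschitzOnWith
    have hfU : ∀ᶠ t in nhds t₁, f t ∈ U := hcont.continuousAt.preimage_mem_nhds (ht₁ ▸ hU)
    refine ODE_solution_unique_of_eventually (v := fun _ => v) (Filter.Eventually.of_forall
      fun _ => hlip) (hfU.mono fun t ht => ⟨hf t, ht⟩) (Filter.Eventually.of_forall
      fun t => ⟨?_, mem_of_mem_nhds hU⟩) ht₁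
    rw [hf₀]
    exact hasDerivAt_const t (f t₀)
  have hclopen : IsClopen {t | f t = f t₀} := ⟨isClosed_eq hcont continuous_const, hopen⟩
  exact Set.eq_univ_iff_forall.1 (hclopen.eq_univ ⟨t₀, rfl⟩) t

lemma contDiff_euler (J : Matrix (Fin 3) (Fin 3) ℝ) :
    ContDiff ℝ 1 fun w => J⁻¹ *ᵥ cross3 (J *ᵥ w) w := by
  refine (mulVecLin J⁻¹).toContinuousLinearMap.contDiff.comp (contDiff_pi.2 fun i => ?_)
  fin_cases i <;> simp [cross3, mulVec, dotProduct, Fin.sum_univ_three] <;> fun_prop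

section MatrixIntegral

variable {m n : Type*} [Fintype m] [Fintype n] {F : ℝ → Matrix m n ℝ} {t₁ t₂ : ℝ}

lemma transpose_intervalIntegral (hF : Continuous F) :
    (∫ τ in t₁..t₂, F τ)ᵀ = ∫ τ in t₁..t₂, (F τ)ᵀ :=
  ((transposeLinearEquiv m n ℝ ℝ).toLinearMap.toContinuousLinearMap.intervalIntegral_comp_comm
    (hF.intervalIntegrable t₁ t₂)).symm

lemma dotProduct_intervalIntegral_mulVec (hF : Continuous F) (x : m → ℝ) (y : n → ℝ) :
    x ⬝ᵥ (∫ τ in t₁..t₂, F τ) *ᵥ y = ∫ τ in t₁..t₂, x ⬝ᵥ F τ *ᵥ y :=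
  let L : Matrix m n ℝ →ₗ[ℝ] ℝ :=
    { toFun := fun M => x ⬝ᵥ M *ᵥ y
      map_add' := fun M N => by simp [add_mulVec]
      map_smul' := fun c M => by simp [smul_mulVec] }
  (L.toContinuousLinearMap.intervalIntegral_comp_comm (hF.intervalIntegrable t₁ t₂)).symm

end MatrixIntegral

/-- For a unit vector `a`, `xᵀ[a]ₓᵀ[a]ₓx = |x|² - (a·x)²`, so the persistent excitation inequality
is a bound on the mean of `(a·x)²`. -/
theorem PE.of_integral_sq_dotProduct_le {a : ℝ → Fin 3 → ℝ} {T μ : ℝ} (hT : 0 < T)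
    (ha : Continuous a) (ha_unit : ∀ s, a s ⬝ᵥ a s = 1)
    (h : ∀ t x, ∫ s in t..t + T, (a s ⬝ᵥ x) ^ 2 ≤ T * (1 - μ) * (x ⬝ᵥ x)) : PE a T μ := by
  intro t
  set F := fun τ => (skew3 (a τ))ᵀ * skew3 (a τ)
  have hF : Continuous F := by
    have := continuous_skew3.comp ha
    fun_prop
  refine .of_dotProduct_mulVec_nonneg ?_ fun x => ?_
  · refine IsHermitian.sub (IsHermitian.smul ?_ (.all _)) (isHermitian_one.smul (.all _))
    rw [IsHermitian, conjTranspose_eq_transpose_of_trivial, transpose_intervalIntegral hF]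
    simp [F, transpose_mul]
  · have hquad : ∀ τ, x ⬝ᵥ F τ *ᵥ x = x ⬝ᵥ x - (a τ ⬝ᵥ x) ^ 2 := fun τ => by
      rw [dotProduct_skew3_transpose_mul_skew3_mulVec, ha_unit, one_mul]
    have hsq : Continuous fun s => (a s ⬝ᵥ x) ^ 2 := by fun_prop
    rw [star_trivial, sub_mulVec, smul_mulVec, smul_mulVec, one_mulVec, dotProduct_sub,
      dotProduct_smul, dotProduct_smul, dotProduct_intervalIntegral_mulVec hF,
      intervalIntegral.integral_congr fun τ _ => hquad τ, intervalIntegral.integral_sub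
      intervalIntegrable_const (hsq.intervalIntegrable _ _), intervalIntegral.integral_const,
      add_sub_cancel_left, smul_eq_mul, smul_eq_mul, smul_eq_mul]
    have key : T⁻¹ * (T * (x ⬝ᵥ x) - ∫ s in t..t + T, (a s ⬝ᵥ x) ^ 2) - μ * (x ⬝ᵥ x)
        = T⁻¹ * (T * (1 - μ) * (x ⬝ᵥ x) - ∫ s in t..t + T, (a s ⬝ᵥ x) ^ 2) := by
      field_simp
      ring
    rw [key]
    exact mul_nonneg (inv_nonneg.2 hT.le) (sub_nonneg.2 (h t x))

section Averages

open Real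

lemma integral_sq_trig_period (K C B α : ℝ) :
    ∫ θ in α..α + 2 * π, (K + cos θ * C - sin θ * B) ^ 2
      = 2 * π * (K ^ 2 + (C ^ 2 + B ^ 2) / 2) := by
  set G : ℝ → ℝ := fun θ => (K ^ 2 + (C ^ 2 + B ^ 2) / 2) * θ + 2 * K * C * sin θ
    + 2 * K * B * cos θ + (C ^ 2 - B ^ 2) / 2 * (sin θ * cos θ) - C * B * (sin θ * sin θ)
  have hG : ∀ θ, HasDerivAt G ((K + cos θ * C - sin θ * B) ^ 2) θ := fun θ => by
    have h := (((((hasDerivAt_id θ).const_mul (K ^ 2 + (C ^ 2 + B ^ 2) / 2)).add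
      ((hasDerivAt_sin θ).const_mul (2 * K * C))).add
      ((hasDerivAt_cos θ).const_mul (2 * K * B))).add
      (((hasDerivAt_sin θ).mul (hasDerivAt_cos θ)).const_mul ((C ^ 2 - B ^ 2) / 2))).sub
      (((hasDerivAt_sin θ).mul (hasDerivAt_sin θ)).const_mul (C * B))
    refine h.congr_deriv ?_
    linear_combination (-(C ^ 2 + B ^ 2) / 2) * sin_sq_add_cos_sq θ
  rw [intervalIntegral.integral_eq_sub_of_hasDerivAt (fun θ _ => hG θ)
    (Continuous.intervalIntegrable (by fun_prop) _ _)]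
  simp only [G, sin_add_two_pi, cos_add_two_pi]
  ring

lemma integral_sq_trig_mul_sub (K C B : ℝ) {w : ℝ} (hw : w ≠ 0) (t₀ t : ℝ) :
    ∫ s in t..t + 2 * π / w, (K + cos (w * (s - t₀)) * C - sin (w * (s - t₀)) * B) ^ 2
      = 2 * π / w * (K ^ 2 + (C ^ 2 + B ^ 2) / 2) := by
  simp_rw [mul_sub w]
  rw [intervalIntegral.integral_comp_mul_sub (fun θ => (K + cos θ * C - sin θ * B) ^ 2) hw,
    show w * (t + 2 * π / w) - w * t₀ = w * t - w * t₀ + 2 * π by field_simp; ring,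
    integral_sq_trig_period, smul_eq_mul]
  ring

end Averages

/-- Rodrigues' formula: `b` rotated by the angle `-θ` about the unit axis `n`. -/
def precession (n b : Fin 3 → ℝ) (θ : ℝ) : Fin 3 → ℝ :=
  (n ⬝ᵥ b) • n + Real.cos θ • (b - (n ⬝ᵥ b) • n) - Real.sin θ • cross3 n b

section Precession

variable {n b : Fin 3 → ℝ}

lemma precession_zero : precession n b 0 = b := by
  simp [precession]

lemma precession_frame (hn : n ⬝ᵥ n = 1) (hb : b ⬝ᵥ b = 1) :
    n ⬝ᵥ (b - (n ⬝ᵥ b) • n) = 0 ∧ n ⬝ᵥ cross3 n b = 0 ∧ (b - (n ⬝ᵥ b) • n) ⬝ᵥ cross3 n b = 0 ∧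
      (b - (n ⬝ᵥ b) • n) ⬝ᵥ (b - (n ⬝ᵥ b) • n) = 1 - (n ⬝ᵥ b) ^ 2 ∧
      cross3 n b ⬝ᵥ cross3 n b = 1 - (n ⬝ᵥ b) ^ 2 := by
  simp only [dotProduct_sub, sub_dotProduct, dotProduct_smul, smul_dotProduct, smul_eq_mul,
    cross3_dotProduct_left, cross3_dotProduct_right, cross3_dotProduct_self, hn, hb,
    dotProduct_comm b n]
  refine ⟨by ring, trivial, by ring, by ring, by ring⟩

lemma cross3_precession (hn : n ⬝ᵥ n = 1) (θ : ℝ) :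
    cross3 n (precession n b θ) = Real.cos θ • cross3 n b + Real.sin θ • (b - (n ⬝ᵥ b) • n) := by
  simp only [precession, ← skew3_mulVec, mulVec_add, mulVec_sub, mulVec_smul]
  simp only [skew3_mulVec, cross3_cross3, hn]
  rw [show cross3 n n = 0 by simpa using cross3_smul_self 1 n]
  module

lemma hasDerivAt_precession (hn : n ⬝ᵥ n = 1) (θ : ℝ) :
    HasDerivAt (precession n b) (-cross3 n (precession n b θ)) θ := by
  refine HasDerivAt.congr_deriv (f := precession n b) ((((Real.hasDerivAt_cos θ).smul_const
    (b - (n ⬝ᵥ b) • n)).const_add ((n ⬝ᵥ b) • n)).sub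
    ((Real.hasDerivAt_sin θ).smul_const (cross3 n b))) ?_
  rw [cross3_precession hn]
  module

lemma precession_dotProduct (θ : ℝ) (x : Fin 3 → ℝ) :
    precession n b θ ⬝ᵥ x = (n ⬝ᵥ b) * (n ⬝ᵥ x) + Real.cos θ * ((b - (n ⬝ᵥ b) • n) ⬝ᵥ x)
      - Real.sin θ * (cross3 n b ⬝ᵥ x) := by
  simp only [precession, sub_dotProduct, add_dotProduct, smul_dotProduct, smul_eq_mul]

lemma precession_dotProduct_self (hn : n ⬝ᵥ n = 1) (hb : b ⬝ᵥ b = 1) (θ : ℝ) :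
    precession n b θ ⬝ᵥ precession n b θ = 1 := by
  obtain ⟨hnp, hnq, hpq, hpp, hqq⟩ := precession_frame hn hb
  rw [precession]
  set p := b - (n ⬝ᵥ b) • n
  set q := cross3 n b
  simp only [add_dotProduct, sub_dotProduct, dotProduct_add, dotProduct_sub, smul_dotProduct,
    dotProduct_smul, smul_eq_mul, dotProduct_comm p n, dotProduct_comm q n, dotProduct_comm q p,
    hn, hnp, hnq, hpq, hpp, hqq]
  nlinarith [Real.sin_sq_add_cos_sq θ]

lemma precession_average_le (hn : n ⬝ᵥ n = 1) (hb : b ⬝ᵥ b = 1) (hnb : (n ⬝ᵥ b) ^ 2 < 1)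
    (x : Fin 3 → ℝ) :
    (n ⬝ᵥ b) ^ 2 * (n ⬝ᵥ x) ^ 2 + (((b - (n ⬝ᵥ b) • n) ⬝ᵥ x) ^ 2 + (cross3 n b ⬝ᵥ x) ^ 2) / 2
      ≤ max ((n ⬝ᵥ b) ^ 2) ((1 - (n ⬝ᵥ b) ^ 2) / 2) * (x ⬝ᵥ x) := by
  obtain ⟨hnp, hnq, hpq, hpp, hqq⟩ := precession_frame hn hb
  have hbessel := bessel_orthogonal (sub_pos.2 hnb) hn hpp hqq hnp hnq hpq x
  have hcs : (n ⬝ᵥ x) ^ 2 ≤ x ⬝ᵥ x := by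
    nlinarith [sq_nonneg ((b - (n ⬝ᵥ b) • n) ⬝ᵥ x), sq_nonneg (cross3 n b ⬝ᵥ x)]
  nlinarith [mul_nonneg (sub_nonneg.2 (le_max_left ((n ⬝ᵥ b) ^ 2) ((1 - (n ⬝ᵥ b) ^ 2) / 2)))
      (sq_nonneg (n ⬝ᵥ x)),
    mul_nonneg (sub_nonneg.2 (le_max_right ((n ⬝ᵥ b) ^ 2) ((1 - (n ⬝ᵥ b) ^ 2) / 2)))
      (sub_nonneg.2 hcs)]

lemma integral_sq_precession_dotProduct_le (hn : n ⬝ᵥ n = 1) (hb : b ⬝ᵥ b = 1)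
    (hnb : (n ⬝ᵥ b) ^ 2 < 1) {w : ℝ} (hw : 0 < w) (t₀ t : ℝ) (x : Fin 3 → ℝ) :
    ∫ s in t..t + 2 * Real.pi / w, (precession n b (w * (s - t₀)) ⬝ᵥ x) ^ 2
      ≤ 2 * Real.pi / w * max ((n ⬝ᵥ b) ^ 2) ((1 - (n ⬝ᵥ b) ^ 2) / 2) * (x ⬝ᵥ x) := by
  simp only [precession_dotProduct]
  rw [integral_sq_trig_mul_sub _ _ _ hw.ne', mul_assoc, mul_pow]
  exact mul_le_mul_of_nonneg_left (precession_average_le hn hb hnb x) (by positivity)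

theorem PE_precession (hn : n ⬝ᵥ n = 1) (hb : b ⬝ᵥ b = 1) (hnb : (n ⬝ᵥ b) ^ 2 < 1) {w : ℝ}
    (hw : 0 < w) (t₀ : ℝ) :
    PE (fun t => precession n b (w * (t - t₀))) (2 * Real.pi / w)
      (1 - max ((n ⬝ᵥ b) ^ 2) ((1 - (n ⬝ᵥ b) ^ 2) / 2)) := by
  refine PE.of_integral_sq_dotProduct_le (by positivity) ?_
    (fun _ => precession_dotProduct_self hn hb _) fun t x => ?_
  · exact (continuous_iff_continuousAt.2 fun θ => (hasDerivAt_precession hn θ).continuousAt).comp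
      (by fun_prop)
  · rw [sub_sub_cancel]
    exact integral_sq_precession_dotProduct_le hn hb hnb hw t₀ t x

end Precession

lemma transpose_mulVec_eq_precession {R : ℝ → Matrix (Fin 3) (Fin 3) ℝ} {n : Fin 3 → ℝ}
    {w t₀ : ℝ} (hn : n ⬝ᵥ n = 1) (hR : ∀ t, HasDerivAt R (R t * skew3 (w • n)) t)
    (v : Fin 3 → ℝ) (t : ℝ) : (R t)ᵀ *ᵥ v = precession n ((R t₀)ᵀ *ᵥ v) (w * (t - t₀)) := by
  set L := (toLin' (-skew3 (w • n))).toContinuousLinearMap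
  have hL : ∀ y, L y = -cross3 (w • n) y := fun y => by
    simp [L, skew3_mulVec]
  refine congrFun (ODE_solution_unique_univ (v := fun _ => L) (f := fun t => (R t)ᵀ *ᵥ v)
    (g := fun t => precession n ((R t₀)ᵀ *ᵥ v) (w * (t - t₀))) (s := fun _ => Set.univ)
    (fun _ => L.lipschitz.lipschitzOnWith) (fun s => ⟨?_, trivial⟩) (fun s => ⟨?_, trivial⟩)
    (t₀ := t₀) ?_) t
  · simp only [mulVec_transpose]
    refine ((hR s).const_vecMul v).congr_deriv ?_
    rw [← vecMul_vecMul, ← mulVec_transpose, skew3_transpose, neg_mulVec, hL, skew3_mulVec]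
  · have hθ : HasDerivAt (fun s => w * (s - t₀)) w s := by
      simpa using ((hasDerivAt_id s).sub_const t₀).const_mul w
    refine ((hasDerivAt_precession hn _).scomp s hθ).congr_deriv ?_
    rw [hL, cross3_smul_left, smul_neg]
  · simp [precession_zero]

lemma transpose_mulVec_eq_precession_of_eigenvector {J : Matrix (Fin 3) (Fin 3) ℝ}
    {E : (Fin 3 → ℝ) → Fin 3 → ℝ} (hE : ∀ w, E w = J⁻¹ *ᵥ cross3 (J *ᵥ w) w)
    {R : ℝ → Matrix (Fin 3) (Fin 3) ℝ} {ω : ℝ → Fin 3 → ℝ}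
    (hR : ∀ t, HasDerivAt R (R t * skew3 (ω t)) t) (hω : ∀ t, HasDerivAt ω (E (ω t)) t)
    {t₀ lam : ℝ} (hlam : J *ᵥ ω t₀ = lam • ω t₀) (hω₀ : ω t₀ ≠ 0) (v : Fin 3 → ℝ) (t : ℝ) :
    (R t)ᵀ *ᵥ v = precession ((enorm3 (ω t₀))⁻¹ • ω t₀) ((R t₀)ᵀ *ᵥ v)
      (enorm3 (ω t₀) * (t - t₀)) := by
  have hω_const := ODE_solution_eq_of_vectorField_eq_zero (funext hE ▸ contDiff_euler J) hω
    (by rw [hE, hlam, cross3_smul_self, mulVec_zero])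
  refine transpose_mulVec_eq_precession (dotProduct_self_inv_enorm3_smul hω₀) (fun t => ?_) v t
  rw [smul_smul, mul_inv_cancel₀ (enorm3_pos hω₀).ne', one_smul, ← hω_const t]
  exact hR t

theorem type1_nonaligned_PE_general
    (J1 J2 J3 : ℝ) (hJ1 : 0 < J1) (hJ2 : 0 < J2) (hJ3 : 0 < J3)
    (J : Matrix (Fin 3) (Fin 3) ℝ) (hJ : J = Matrix.diagonal ![J1, J2, J3])
    (E : (Fin 3 → ℝ) → Fin 3 → ℝ)
    (hE : ∀ w, E w = J⁻¹.mulVec (cross3 (J.mulVec w) w))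
    (t₀ : ℝ)
    (R : ℝ → Matrix (Fin 3) (Fin 3) ℝ) (ω : ℝ → Fin 3 → ℝ)
    (hRode : ∀ t, HasDerivAt R (R t * skew3 (ω t)) t)
    (hωode : ∀ t, HasDerivAt ω (E (ω t)) t)
    (hR₀orth : (R t₀)ᵀ * R t₀ = 1)
    (hω₀ : ω t₀ ≠ 0)
    (heig : ∃ lam : ℝ, J.mulVec (ω t₀) = lam • ω t₀)
    (aring : Fin 3 → ℝ) (haring : enorm3 aring = 1)
    (M : Fin 3 → ℝ) (hM : M = (R t₀).mulVec (J.mulVec (ω t₀)))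
    (hnotpar : ∀ s : ℝ, aring ≠ s • M)
    (u : Fin 3 → ℝ) (hu : u = (enorm3 M)⁻¹ • M)
    (a1 : ℝ) (ha1 : a1 = aring ⬝ᵥ u)
    (w : ℝ) (hw : w = enorm3 (ω t₀))
    (T : ℝ) (hT : T = 2 * Real.pi / w)
    (μ : ℝ) (hμ : μ = min (1 - a1 ^ 2) ((1 + a1 ^ 2) / 2))
    (a : ℝ → Fin 3 → ℝ) (ha : ∀ t, a t = (R t)ᵀ.mulVec aring) :
    (0 < μ ∧ μ < 1) ∧ PE a T μ ∧
      ∀ t : ℝ, ∀ x : Fin 3 → ℝ, enorm3 x = 1 →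
        (1 / T) * (∫ s in t..(t + T), (a s ⬝ᵥ x) ^ 2) ≤ 1 - μ := by
  obtain ⟨lam, hlam⟩ := heig
  subst hw
  have hw_pos : 0 < enorm3 (ω t₀) := enorm3_pos hω₀
  set n := (enorm3 (ω t₀))⁻¹ • ω t₀ with hn_def
  set b := (R t₀)ᵀ *ᵥ aring
  have hn : n ⬝ᵥ n = 1 := dotProduct_self_inv_enorm3_smul hω₀
  have haring_unit : aring ⬝ᵥ aring = 1 := by rw [dotProduct_self_eq_enorm3_sq, haring, one_pow]
  have hb : b ⬝ᵥ b = 1 := by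
    rw [mulVec_dotProduct_mulVec (by rw [transpose_transpose, mul_eq_one_comm, hR₀orth]),
      haring_unit]
  have hc : lam * enorm3 (ω t₀) ≠ 0 := mul_ne_zero (ne_zero_of_diagonal_mulVec_eq_smul
    (fun i => by fin_cases i <;> simp [hJ1.ne', hJ2.ne', hJ3.ne']) hω₀ (hJ ▸ hlam)) hw_pos.ne'
  have hMn : M = (lam * enorm3 (ω t₀)) • R t₀ *ᵥ n := by
    rw [hM, hlam, hn_def, mulVec_smul, mulVec_smul, smul_smul, mul_assoc,
      mul_inv_cancel₀ hw_pos.ne', mul_one]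
  have ha1_sq : a1 ^ 2 = (n ⬝ᵥ b) ^ 2 := by
    rw [ha1, hu, hMn, sq_dotProduct_inv_enorm3_smul_mulVec hR₀orth hn hc]
  have hnb : (n ⬝ᵥ b) ^ 2 < 1 :=
    sq_dotProduct_transpose_mulVec_lt_one hR₀orth hn haring_unit hc (hMn ▸ hnotpar)
  refine ⟨⟨hμ ▸ lt_min (by linarith) (by positivity),
    hμ ▸ (min_le_right _ _).trans_lt (by linarith)⟩, ?_⟩
  have hμ' : μ = 1 - max ((n ⬝ᵥ b) ^ 2) ((1 - (n ⬝ᵥ b) ^ 2) / 2) := by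
    rw [hμ, ← min_sub_sub_left, ← ha1_sq]
    congr 1
    ring
  have ha_prec : a = fun t => precession n b (enorm3 (ω t₀) * (t - t₀)) := funext fun t =>
    (ha t).trans (transpose_mulVec_eq_precession_of_eigenvector hE hRode hωode hlam hω₀ _ t)
  subst ha_prec hT hμ'
  refine ⟨PE_precession hn hb hnb hw_pos t₀, fun t x hx => ?_⟩
  rw [one_div, inv_mul_le_iff₀ (by positivity)]
  simpa [dotProduct_self_eq_enorm3_sq, hx] using
    integral_sq_precession_dotProduct_le hn hb hnb hw_pos t₀ t x

/-- in free rotation with `ω(t₀)` an eigenvector of `J` and `å` not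
parallel to the angular momentum `M = R(t₀)Jω(t₀)`, the measurement `a(t) = R(t)ᵀå`
satisfies the persistent excitation condition with `T = 2π/w` and
`μ = min(1−a₁², (1+a₁²)/2)`. -/
theorem type1_nonaligned_PE
    (J1 J2 J3 : ℝ) (hJ1 : 0 < J1) (hJ2 : 0 < J2) (hJ3 : 0 < J3)
    (J : Matrix (Fin 3) (Fin 3) ℝ) (hJ : J = Matrix.diagonal ![J1, J2, J3])
    (E : (Fin 3 → ℝ) → Fin 3 → ℝ)
    (hE : ∀ w, E w = J⁻¹.mulVec (cross3 (J.mulVec w) w))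
    (t₀ : ℝ)
    (R : ℝ → Matrix (Fin 3) (Fin 3) ℝ) (ω : ℝ → Fin 3 → ℝ)
    (hRode : ∀ t, HasDerivAt R (R t * skew3 (ω t)) t)
    (hωode : ∀ t, HasDerivAt ω (E (ω t)) t)
    (hR₀orth : (R t₀)ᵀ * R t₀ = 1) (hR₀det : (R t₀).det = 1)
    (hω₀ : ω t₀ ≠ 0)
    (heig : ∃ lam : ℝ, J.mulVec (ω t₀) = lam • ω t₀)
    (aring : Fin 3 → ℝ) (haring : enorm3 aring = 1)
    (M : Fin 3 → ℝ) (hM : M = (R t₀).mulVec (J.mulVec (ω t₀)))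
    (hnotpar : ∀ s : ℝ, aring ≠ s • M)
    (u : Fin 3 → ℝ) (hu : u = (enorm3 M)⁻¹ • M)
    (a1 : ℝ) (ha1 : a1 = aring ⬝ᵥ u)
    (w : ℝ) (hw : w = enorm3 (ω t₀))
    (T : ℝ) (hT : T = 2 * Real.pi / w)
    (μ : ℝ) (hμ : μ = min (1 - a1 ^ 2) ((1 + a1 ^ 2) / 2))
    (a : ℝ → Fin 3 → ℝ) (ha : ∀ t, a t = (R t)ᵀ.mulVec aring) :
    (0 < μ ∧ μ < 1) ∧ PE a T μ ∧
      ∀ t : ℝ, ∀ x : Fin 3 → ℝ, enorm3 x = 1 →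
        (1 / T) * (∫ s in t..(t + T), (a s ⬝ᵥ x) ^ 2) ≤ 1 - μ :=
  type1_nonaligned_PE_general J1 J2 J3 hJ1 hJ2 hJ3 J hJ E hE t₀ R ω hRode hωode hR₀orth hω₀ heig
    aring haring M hM hnotpar u hu a1 ha1 w hw T hT μ hμ a ha
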